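/- For every natural number k ≥ 1, the abelianization of the group defined by the presentation ⟨u, t | (ut⁻²)ᵏ = 1, tut⁻¹u⁻² = 1⟩ is a cyclic group of order 2k (that is, it is isomorphic to Multiplicative (ZMod (2k))). -/

import Mathlib

/-!
In the abelianization the relator `tut⁻¹u⁻²` becomes `u⁻¹`, so `u = 1` and the relator
`(ut⁻²)ᵏ` becomes `t⁻²ᵏ`. Hence the abelianization is cyclic, generated by `t` with `t²ᵏ = 1`.
The assignment `u ↦ 0`, `t ↦ 1` respects both relators in `ZMod (2k)`, so the order of `t` is
exactly `2k`.
-/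

/-- Relators for the presentation `⟨u, t | (ut⁻²)ᵏ, tut⁻¹u⁻²⟩`,
with generators `u = 0`, `t = 1`. -/
def relsUT (k : ℕ) : Set (FreeGroup (Fin 2)) :=
  let u : FreeGroup (Fin 2) := FreeGroup.of 0
  let t : FreeGroup (Fin 2) := FreeGroup.of 1
  {(u * t⁻¹ * t⁻¹) ^ k, t * u * t⁻¹ * u⁻¹ * u⁻¹}

theorem orderOf_eq_of_pow_eq_one_of_orderOf_map {G H : Type*} [Monoid G] [Monoid H] {t : G}
    {n : ℕ} (ht : t ^ n = 1) (φ : G →* H) (hφ : orderOf (φ t) = n) : orderOf t = n :=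
  Nat.dvd_antisymm (orderOf_dvd_of_pow_eq_one ht) (hφ ▸ orderOf_map_dvd φ t)

theorem nonempty_mulEquiv_zmod_of_generator {G H : Type*} [Group G] [Monoid H] {t : G}
    (hgen : ∀ x, x ∈ Subgroup.zpowers t) {n : ℕ} (ht : t ^ n = 1) (φ : G →* H)
    (hφ : orderOf (φ t) = n) : Nonempty (G ≃* Multiplicative (ZMod n)) := by
  have hcard : Nat.card G = n := by
    rw [← orderOf_eq_of_pow_eq_one_of_orderOf_map ht φ hφ, ← Nat.card_zpowers,
      Nat.card_congr (Equiv.subtypeUnivEquiv hgen)]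
  exact ⟨(zmodMulEquivOfGenerator hgen hcard).symm⟩

theorem Abelianization.presentedGroup_generated_by {α : Type*} {rels : Set (FreeGroup α)}
    (H : Subgroup (Abelianization (PresentedGroup rels)))
    (h : ∀ j, Abelianization.of (PresentedGroup.of j) ∈ H)
    (x : Abelianization (PresentedGroup rels)) : x ∈ H := by
  obtain ⟨p, rfl⟩ := QuotientGroup.mk_surjective x
  exact PresentedGroup.generated_by rels (H.comap Abelianization.of) h p

namespace relsUT

variable {k : ℕ}

abbrev u (k : ℕ) : Abelianization (PresentedGroup (relsUT k)) := .of (.of 0)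

abbrev t (k : ℕ) : Abelianization (PresentedGroup (relsUT k)) := .of (.of 1)

theorem conj_relator_eq_one : t k * u k * (t k)⁻¹ * (u k)⁻¹ * (u k)⁻¹ = 1 :=
  congrArg Abelianization.of (PresentedGroup.one_of_mem (Set.mem_insert_of_mem _ rfl))

theorem pow_relator_eq_one : (u k * (t k)⁻¹ * (t k)⁻¹) ^ k = 1 :=
  congrArg Abelianization.of (PresentedGroup.one_of_mem (Set.mem_insert _ _))

theorem u_eq_one : u k = 1 := by
  simpa [mul_comm (t k)] using conj_relator_eq_one (k := k)

theorem t_pow_eq_one : t k ^ (2 * k) = 1 := by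
  simpa [u_eq_one, pow_mul, ← mul_inv_rev, sq] using pow_relator_eq_one (k := k)

theorem mem_zpowers_t (x : Abelianization (PresentedGroup (relsUT k))) :
    x ∈ Subgroup.zpowers (t k) :=
  Abelianization.presentedGroup_generated_by _
    (Fin.forall_fin_two.2 ⟨(u_eq_one (k := k) ▸ one_mem _ : u k ∈ _), Subgroup.mem_zpowers _⟩) x

def toZMod (k : ℕ) :
    Abelianization (PresentedGroup (relsUT k)) →* Multiplicative (ZMod (2 * k)) :=
  Abelianization.lift <| PresentedGroup.toGroup (f := ![1, .ofAdd 1]) <| by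
    rintro r (rfl | rfl)
    · simp only [map_pow, map_mul, map_inv, FreeGroup.lift_apply_of, Matrix.cons_val_zero,
        Matrix.cons_val_one, Matrix.cons_val_fin_one, one_mul]
      rw [← mul_inv_rev, ← sq, inv_pow, ← pow_mul, inv_eq_one, ← ofAdd_nsmul, nsmul_one,
        ZMod.natCast_self, ofAdd_zero]
    · simp

theorem orderOf_toZMod_t : orderOf (toZMod k (t k)) = 2 * k := by
  simp [toZMod, PresentedGroup.toGroup.of]

end relsUT

theorem abelianization_relsUT_general (k : ℕ) :
    Nonempty (Abelianization (PresentedGroup (relsUT k)) ≃*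
      Multiplicative (ZMod (2 * k))) :=
  nonempty_mulEquiv_zmod_of_generator relsUT.mem_zpowers_t relsUT.t_pow_eq_one
    (relsUT.toZMod k) relsUT.orderOf_toZMod_t

theorem abelianization_relsUT (k : ℕ) (hk : 1 ≤ k) :
    Nonempty (Abelianization (PresentedGroup (relsUT k)) ≃*
      Multiplicative (ZMod (2 * k))) :=
  abelianization_relsUT_general k
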